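/- Let K₁ and K₂ be complex Hilbert spaces. Let R₁ be a bounded operator on K₁ with R₁† = −R₁ and R₁ ∘ R₁ = −1, and R₂ a bounded operator on K₂ with R₂† = −R₂ and R₂ ∘ R₂ = −1. Let L : K₁ → K₂ be a bounded bijective linear map with L† ∘ R₂ ∘ L = R₁, and set Q := L† ∘ L. Suppose there are conjugations Γ₁ on K₁ and Γ₂ on K₂ satisfying Γ₁ ∘ R₁ = R₁ ∘ Γ₁, Γ₂ ∘ R₂ = R₂ ∘ Γ₂, and L ∘ Γ₁ = Γ₂ ∘ L. Let Π₁ := (1 − i·R₁)/2 (the orthogonal projection onto the +i eigenspace of R₁) and Π₂ := (1 + i·R₂)/2 (the orthogonal projection onto the −i eigenspace of R₂). Then the operator Π₁ ∘ L⁻¹ ∘ Π₂ : K₂ → K₁ is Hilbert–Schmidt if and only if Q − 1 is Hilbert–Schmidt. -/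

import Mathlib

/-!
Write `B = L⁻¹`. The relation `L† R₂ L = R₁` gives `B R₂ = Q⁻¹ R₁ B`, and `R₁² = -1` gives
`Π₁ R₁ = i Π₁`; together they yield `Π₁ B Π₂ = (i/2) Π₁ (Q⁻¹ - 1) R₁ B`. Since `R₁ B` is invertible,
`Π₁ B Π₂` is Hilbert–Schmidt iff `Π₁ (Q⁻¹ - 1)` is. The conjugation `Γ₁` commutes with `R₁` and
with `Q`, and, being antilinear, it exchanges `Π₁` with `1 - Π₁`; so `(1 - Π₁)(Q⁻¹ - 1)` is
Hilbert–Schmidt together with `Π₁ (Q⁻¹ - 1)`, hence so is their sum `Q⁻¹ - 1`, and finally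
`Q - 1 = -Q (Q⁻¹ - 1)`.
-/

noncomputable section

universe u v w

/-- A bounded linear operator between complex Hilbert spaces is **Hilbert–Schmidt** if for some
(equivalently, every) Hilbert orthonormal basis `(e i)` of its domain, the family
`i ↦ ‖T (e i)‖ ^ 2` is summable. -/
def IsHilbertSchmidt {E : Type u} {F : Type v} [NormedAddCommGroup E] [InnerProductSpace ℂ E]
    [NormedAddCommGroup F] [InnerProductSpace ℂ F] (T : E →L[ℂ] F) : Prop :=
  ∃ (ι : Type u) (b : HilbertBasis ι ℂ E), Summable fun i => ‖T (b i)‖ ^ 2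

open ContinuousLinearMap
open scoped InnerProductSpace

variable {E F G : Type*}
  [NormedAddCommGroup E] [InnerProductSpace ℂ E]
  [NormedAddCommGroup F] [InnerProductSpace ℂ F]
  [NormedAddCommGroup G] [InnerProductSpace ℂ G]

theorem HilbertBasis.tsum_enorm_inner_sq {ι : Type*} (b : HilbertBasis ι ℂ E) (x : E) :
    ∑' i, ‖⟪b i, x⟫_ℂ‖ₑ ^ 2 = ‖x‖ₑ ^ 2 := by
  have h : HasSum (fun i => ‖⟪b i, x⟫_ℂ‖ ^ 2) (‖x‖ ^ 2) := by
    have h := b.hasSum_inner_mul_inner x x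
    have hterm : ∀ i, ⟪x, b i⟫_ℂ * ⟪b i, x⟫_ℂ = ((‖⟪b i, x⟫_ℂ‖ ^ 2 : ℝ) : ℂ) := fun i => by
      rw [← inner_conj_symm x, RCLike.conj_mul]; norm_cast
    rw [funext hterm, inner_self_eq_norm_sq_to_K, ← RCLike.ofReal_pow] at h
    exact (RCLike.hasSum_ofReal ℂ).mp h
  rw [← ofReal_norm, ← ENNReal.ofReal_pow (norm_nonneg x), ← h.tsum_eq,
    ENNReal.ofReal_tsum_of_nonneg (fun i => by positivity) h.summable]
  simp only [ENNReal.ofReal_pow (norm_nonneg _), ofReal_norm]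

theorem summable_norm_sq_iff_tsum_enorm_sq_ne_top {ι V : Type*} [SeminormedAddCommGroup V]
    {f : ι → V} : (Summable fun i => ‖f i‖ ^ 2) ↔ ∑' i, ‖f i‖ₑ ^ 2 ≠ ⊤ := by
  simp only [enorm_eq_nnnorm, ← ENNReal.coe_pow, ENNReal.tsum_coe_ne_top_iff_summable,
    ← NNReal.summable_coe, NNReal.coe_pow, coe_nnnorm]

theorem tsum_enorm_apply_sq_eq_adjoint [CompleteSpace E] [CompleteSpace F] {ι κ : Type*}
    (T : E →L[ℂ] F) (b : HilbertBasis ι ℂ E) (c : HilbertBasis κ ℂ F) :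
    ∑' i, ‖T (b i)‖ₑ ^ 2 = ∑' j, ‖adjoint T (c j)‖ₑ ^ 2 :=
  calc ∑' i, ‖T (b i)‖ₑ ^ 2 = ∑' i, ∑' j, ‖⟪c j, T (b i)⟫_ℂ‖ₑ ^ 2 := by
        simp only [c.tsum_enorm_inner_sq]
    _ = ∑' j, ∑' i, ‖⟪b i, adjoint T (c j)⟫_ℂ‖ₑ ^ 2 := by
        rw [ENNReal.tsum_comm]
        refine tsum_congr fun j => tsum_congr fun i => ?_
        rw [← adjoint_inner_left, ← ofReal_norm, ← ofReal_norm, norm_inner_symm]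
    _ = ∑' j, ‖adjoint T (c j)‖ₑ ^ 2 := by simp only [b.tsum_enorm_inner_sq]

theorem summable_norm_apply_sq_iff_adjoint [CompleteSpace E] [CompleteSpace F] {ι κ : Type*}
    (T : E →L[ℂ] F) (b : HilbertBasis ι ℂ E) (c : HilbertBasis κ ℂ F) :
    (Summable fun i => ‖T (b i)‖ ^ 2) ↔ Summable fun j => ‖adjoint T (c j)‖ ^ 2 := by
  rw [summable_norm_sq_iff_tsum_enorm_sq_ne_top, summable_norm_sq_iff_tsum_enorm_sq_ne_top,
    tsum_enorm_apply_sq_eq_adjoint T b c]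

namespace IsHilbertSchmidt

theorem summable [CompleteSpace E] [CompleteSpace F] {T : E →L[ℂ] F} (hT : IsHilbertSchmidt T)
    {ι : Type*} (b : HilbertBasis ι ℂ E) : Summable fun i => ‖T (b i)‖ ^ 2 := by
  obtain ⟨ι₀, b₀, hb₀⟩ := hT
  obtain ⟨w, c, -⟩ := exists_hilbertBasis ℂ F
  exact (summable_norm_apply_sq_iff_adjoint T b c).mpr
    ((summable_norm_apply_sq_iff_adjoint T b₀ c).mp hb₀)

theorem adjoint [CompleteSpace E] [CompleteSpace F] {T : E →L[ℂ] F} (hT : IsHilbertSchmidt T) :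
    IsHilbertSchmidt (adjoint T) := by
  obtain ⟨ι, b, hb⟩ := hT
  obtain ⟨w, c, -⟩ := exists_hilbertBasis ℂ F
  exact ⟨w, c, (summable_norm_apply_sq_iff_adjoint T b c).mp hb⟩

theorem clm_comp {T : E →L[ℂ] F} (hT : IsHilbertSchmidt T) (C : F →L[ℂ] G) :
    IsHilbertSchmidt (C ∘L T) := by
  obtain ⟨ι, b, hb⟩ := hT
  refine ⟨ι, b, (hb.mul_left (‖C‖ ^ 2)).of_nonneg_of_le (fun i => by positivity) fun i => ?_⟩
  rw [ContinuousLinearMap.comp_apply, ← mul_pow]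
  gcongr
  exact C.le_opNorm _

theorem comp_clm [CompleteSpace E] [CompleteSpace F] [CompleteSpace G] {T : F →L[ℂ] G}
    (hT : IsHilbertSchmidt T) (C : E →L[ℂ] F) : IsHilbertSchmidt (T ∘L C) := by
  simpa only [adjoint_comp, adjoint_adjoint] using
    (hT.adjoint.clm_comp (ContinuousLinearMap.adjoint C)).adjoint

theorem add [CompleteSpace E] [CompleteSpace F] {S T : E →L[ℂ] F} (hS : IsHilbertSchmidt S)
    (hT : IsHilbertSchmidt T) : IsHilbertSchmidt (S + T) := by
  obtain ⟨ι, b, hb⟩ := hS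
  refine ⟨ι, b, ((hb.add (hT.summable b)).mul_left 2).of_nonneg_of_le (fun i => by positivity)
    fun i => ?_⟩
  rw [add_apply]
  nlinarith [norm_add_le (S (b i)) (T (b i)), norm_nonneg (S (b i) + T (b i)),
    sq_nonneg (‖S (b i)‖ - ‖T (b i)‖)]

theorem smul {T : E →L[ℂ] F} (hT : IsHilbertSchmidt T) (c : ℂ) : IsHilbertSchmidt (c • T) := by
  obtain ⟨ι, b, hb⟩ := hT
  exact ⟨ι, b, by simpa only [smul_apply, norm_smul, mul_pow] using hb.mul_left (‖c‖ ^ 2)⟩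

theorem smul_iff₀ {T : E →L[ℂ] F} {c : ℂ} (hc : c ≠ 0) :
    IsHilbertSchmidt (c • T) ↔ IsHilbertSchmidt T :=
  ⟨fun h => by simpa only [smul_smul, inv_mul_cancel₀ hc, one_smul] using h.smul c⁻¹,
    fun h => h.smul c⟩

end IsHilbertSchmidt

theorem isHilbertSchmidt_comp_iff_of_comp_eq_id [CompleteSpace E] [CompleteSpace F]
    [CompleteSpace G] (T : F →L[ℂ] G) {C : E →L[ℂ] F} {C' : F →L[ℂ] E}
    (hC : C ∘L C' = ContinuousLinearMap.id ℂ F) :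
    IsHilbertSchmidt (T ∘L C) ↔ IsHilbertSchmidt T :=
  ⟨fun h => by simpa only [comp_assoc, hC, comp_id] using h.comp_clm C', fun h => h.comp_clm C⟩

theorem isHilbertSchmidt_inv_sub_one_iff (A : (E →L[ℂ] E)ˣ) :
    IsHilbertSchmidt (↑A⁻¹ - 1 : E →L[ℂ] E) ↔ IsHilbertSchmidt (↑A - 1 : E →L[ℂ] E) := by
  suffices key : ∀ A : (E →L[ℂ] E)ˣ,
      IsHilbertSchmidt (↑A - 1 : E →L[ℂ] E) → IsHilbertSchmidt (↑A⁻¹ - 1 : E →L[ℂ] E) from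
    ⟨fun h => by simpa only [inv_inv] using key A⁻¹ h, key A⟩
  intro A h
  have hfactor : (-↑A⁻¹ : E →L[ℂ] E) * (↑A - 1) = ↑A⁻¹ - 1 := by
    rw [neg_mul, mul_sub, Units.inv_mul, mul_one, neg_sub]
  rw [← hfactor]
  exact h.clm_comp _

section Conjugation

variable {Γ : E → E} (hΓ : Function.Involutive Γ) (hΓinner : ∀ x y, ⟪Γ x, Γ y⟫_ℂ = ⟪y, x⟫_ℂ)
include hΓinner

theorem norm_map_of_inner_map_map_swap (x : E) : ‖Γ x‖ = ‖x‖ := by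
  rw [norm_eq_sqrt_re_inner (𝕜 := ℂ), norm_eq_sqrt_re_inner (𝕜 := ℂ), hΓinner]

include hΓ

def HilbertBasis.conj [CompleteSpace E] {ι : Type*} (b : HilbertBasis ι ℂ E) :
    HilbertBasis ι ℂ E :=
  HilbertBasis.mkOfOrthogonalEqBot (v := fun i => Γ (b i))
    (by
      classical
      refine orthonormal_iff_ite.mpr fun i j => ?_
      rw [hΓinner, orthonormal_iff_ite.mp b.orthonormal j i]
      exact if_congr eq_comm rfl rfl)
    (by
      refine (Submodule.eq_bot_iff _).mpr fun x hx => ?_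
      have hΓx : Γ x = 0 := b.repr.injective <| lp.ext <| funext fun i => by
        rw [HilbertBasis.repr_apply_apply, ← hΓinner, hΓ x, ← inner_conj_symm,
          Submodule.inner_right_of_mem_orthogonal (Submodule.subset_span (Set.mem_range_self i)) hx]
        simp
      rw [← norm_eq_zero, ← hΓ x, norm_map_of_inner_map_map_swap hΓinner, hΓx, norm_zero])

@[simp]
theorem HilbertBasis.coe_conj [CompleteSpace E] {ι : Type*} (b : HilbertBasis ι ℂ E) :
    ⇑(b.conj hΓ hΓinner) = fun i => Γ (b i) :=
  HilbertBasis.coe_mkOfOrthogonalEqBot _ _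

theorem IsHilbertSchmidt.of_norm_apply_conj [CompleteSpace E] {T S : E →L[ℂ] F}
    (hT : IsHilbertSchmidt T) (hST : ∀ x, ‖S (Γ x)‖ = ‖T x‖) : IsHilbertSchmidt S := by
  obtain ⟨ι, b, hb⟩ := hT
  exact ⟨ι, b.conj hΓ hΓinner, by simpa only [HilbertBasis.coe_conj, hST] using hb⟩

end Conjugation

section SpectralProjections

/-- When `R * R = -1`, the projection onto the `i`-eigenspace of `R` (the paper's `Π₁`). -/
def projI (R : E →L[ℂ] E) : E →L[ℂ] E := (2 : ℂ)⁻¹ • (1 - Complex.I • R)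

/-- When `R * R = -1`, the projection onto the `-i`-eigenspace of `R` (the paper's `Π₂`). -/
def projNegI (R : E →L[ℂ] E) : E →L[ℂ] E := (2 : ℂ)⁻¹ • (1 + Complex.I • R)

variable {R : E →L[ℂ] E}

theorem projI_add_projNegI : projI R + projNegI R = 1 := by
  unfold projI projNegI
  module

theorem projI_apply_self_apply (hR : R * R = -1) (x : E) :
    projI R (R x) = Complex.I • projI R x := by
  have hRR : R (R x) = -x := by simpa using congr($hR x)
  simp only [projI, smul_apply, sub_apply, one_apply_eq_self, hRR, smul_sub, smul_smul, smul_neg]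
  match_scalars
  · linear_combination (2⁻¹ : ℂ) * Complex.I_sq
  · ring

theorem conj_projI_apply {Γ : E → E} (hadd : ∀ x y, Γ (x + y) = Γ x + Γ y)
    (hsmul : ∀ (c : ℂ) (x : E), Γ (c • x) = star c • Γ x) (hΓR : ∀ x, Γ (R x) = R (Γ x)) (x : E) :
    Γ (projI R x) = projNegI R (Γ x) := by
  have hsub := map_sub (AddMonoidHom.mk' Γ hadd)
  simp only [AddMonoidHom.mk'_apply] at hsub
  simp only [projI, projNegI, smul_apply, sub_apply, add_apply, one_apply_eq_self, hsmul, hsub,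
    hΓR, star_inv₀, Complex.star_def, map_ofNat, Complex.conj_I, neg_smul, sub_neg_eq_add]

theorem isHilbertSchmidt_projI_comp_iff [CompleteSpace E] {D : E →L[ℂ] E} {Γ : E → E}
    (hadd : ∀ x y, Γ (x + y) = Γ x + Γ y) (hsmul : ∀ (c : ℂ) (x : E), Γ (c • x) = star c • Γ x)
    (hΓ : Function.Involutive Γ) (hΓinner : ∀ x y, ⟪Γ x, Γ y⟫_ℂ = ⟪y, x⟫_ℂ)
    (hΓR : ∀ x, Γ (R x) = R (Γ x)) (hΓD : ∀ x, Γ (D x) = D (Γ x)) :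
    IsHilbertSchmidt (projI R ∘L D) ↔ IsHilbertSchmidt D := by
  refine ⟨fun h => ?_, fun h => h.clm_comp _⟩
  have hNegI : IsHilbertSchmidt (projNegI R ∘L D) :=
    h.of_norm_apply_conj hΓ hΓinner fun x => by
      rw [ContinuousLinearMap.comp_apply, ContinuousLinearMap.comp_apply, ← hΓD,
        ← conj_projI_apply hadd hsmul hΓR, norm_map_of_inner_map_map_swap hΓinner]
  have hsum : projI R ∘L D + projNegI R ∘L D = D := by
    rw [← add_comp, projI_add_projNegI]
    rfl
  exact hsum ▸ h.add hNegI

end SpectralProjections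

namespace ContinuousLinearEquiv

variable [CompleteSpace E] [CompleteSpace F]

theorem adjoint_symm_adjoint_apply (L : E ≃L[ℂ] F) (x : F) :
    adjoint (L.symm : F →L[ℂ] E) (adjoint (L : E →L[ℂ] F) x) = x := by
  rw [← ContinuousLinearMap.comp_apply, ← adjoint_comp, L.coe_comp_coe_symm, adjoint_id, id_apply]

theorem adjoint_adjoint_symm_apply (L : E ≃L[ℂ] F) (y : E) :
    adjoint (L : E →L[ℂ] F) (adjoint (L.symm : F →L[ℂ] E) y) = y := by
  rw [← ContinuousLinearMap.comp_apply, ← adjoint_comp, L.coe_symm_comp_coe, adjoint_id, id_apply]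

def adjointCompSelf (L : E ≃L[ℂ] F) : (E →L[ℂ] E)ˣ where
  val := adjoint (L : E →L[ℂ] F) ∘L L
  inv := (L.symm : F →L[ℂ] E) ∘L adjoint (L.symm : F →L[ℂ] E)
  val_inv := by ext x; simp [adjoint_adjoint_symm_apply]
  inv_val := by ext x; simp [adjoint_symm_adjoint_apply]

end ContinuousLinearEquiv

theorem adjoint_comp_self_apply_conj [CompleteSpace E] [CompleteSpace F] {Γ₁ : E → E}
    {Γ₂ : F → F} (hΓ₁ : Function.Involutive Γ₁) (hΓ₁inner : ∀ x y, ⟪Γ₁ x, Γ₁ y⟫_ℂ = ⟪y, x⟫_ℂ)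
    (hΓ₂inner : ∀ x y, ⟪Γ₂ x, Γ₂ y⟫_ℂ = ⟪y, x⟫_ℂ) {L : E →L[ℂ] F}
    (hLΓ : ∀ x, L (Γ₁ x) = Γ₂ (L x)) (x : E) :
    (adjoint L ∘L L) (Γ₁ x) = Γ₁ ((adjoint L ∘L L) x) := by
  refine ext_inner_left ℂ fun v => ?_
  obtain ⟨w, rfl⟩ := hΓ₁.surjective v
  calc ⟪Γ₁ w, (adjoint L ∘L L) (Γ₁ x)⟫_ℂ = ⟪Γ₂ (L w), Γ₂ (L x)⟫_ℂ := by
        rw [ContinuousLinearMap.comp_apply, adjoint_inner_right, hLΓ, hLΓ]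
    _ = ⟪Γ₁ w, Γ₁ ((adjoint L ∘L L) x)⟫_ℂ := by
        rw [hΓ₂inner, hΓ₁inner, ContinuousLinearMap.comp_apply, adjoint_inner_left]

theorem inv_sub_one_apply_conj {Γ : E → E} (hadd : ∀ x y, Γ (x + y) = Γ x + Γ y)
    (u : (E →L[ℂ] E)ˣ) (hu : ∀ x, Γ ((u : E →L[ℂ] E) x) = (u : E →L[ℂ] E) (Γ x)) (x : E) :
    Γ ((↑u⁻¹ - 1 : E →L[ℂ] E) x) = (↑u⁻¹ - 1 : E →L[ℂ] E) (Γ x) := by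
  have hinv : ∀ y, (↑u⁻¹ : E →L[ℂ] E) ((u : E →L[ℂ] E) y) = y := fun y => by
    rw [← mul_apply_eq_comp, u.inv_mul, one_apply_eq_self]
  have hsub := map_sub (AddMonoidHom.mk' Γ hadd)
  simp only [AddMonoidHom.mk'_apply] at hsub
  rw [sub_apply, sub_apply, one_apply_eq_self, one_apply_eq_self, hsub]
  congr 1
  calc Γ ((↑u⁻¹ : E →L[ℂ] E) x)
      = (↑u⁻¹ : E →L[ℂ] E) ((u : E →L[ℂ] E) (Γ ((↑u⁻¹ : E →L[ℂ] E) x))) := (hinv _).symm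
    _ = (↑u⁻¹ : E →L[ℂ] E) (Γ x) := by
        rw [← hu, ← mul_apply_eq_comp, u.mul_inv, one_apply_eq_self]

theorem projI_comp_symm_comp_projNegI [CompleteSpace E] [CompleteSpace F]
    {R₁ : E →L[ℂ] E} (hR₁ : R₁ * R₁ = -1) {R₂ : F →L[ℂ] F} {L : E ≃L[ℂ] F}
    (hL : adjoint (L : E →L[ℂ] F) ∘L R₂ ∘L (L : E →L[ℂ] F) = R₁) :
    projI R₁ ∘L (L.symm : F →L[ℂ] E) ∘L projNegI R₂
      = (Complex.I * 2⁻¹) • (projI R₁ ∘L ((↑L.adjointCompSelf⁻¹ : E →L[ℂ] E) - 1))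
          ∘L (R₁ ∘L (L.symm : F →L[ℂ] E)) := by
  have hR₂ : ∀ y, L.symm (R₂ y) = (↑L.adjointCompSelf⁻¹ : E →L[ℂ] E) (R₁ (L.symm y)) :=
    fun y => by
      rw [← hL]
      simp [ContinuousLinearEquiv.adjointCompSelf, L.adjoint_symm_adjoint_apply]
  ext y
  simp only [projNegI, ContinuousLinearMap.comp_apply, smul_apply, add_apply, sub_apply,
    one_apply_eq_self, map_add, map_smul, map_sub, ContinuousLinearEquiv.coe_coe, hR₂,
    projI_apply_self_apply hR₁]
  match_scalars
  · linear_combination (2⁻¹ : ℂ) * Complex.I_sq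
  · ring

theorem twoParticle_hilbertSchmidt_iff_arakiYamagami
    {K₁ : Type u} {K₂ : Type v}
    [NormedAddCommGroup K₁] [InnerProductSpace ℂ K₁] [CompleteSpace K₁]
    [NormedAddCommGroup K₂] [InnerProductSpace ℂ K₂] [CompleteSpace K₂]
    (R₁ : K₁ →L[ℂ] K₁) (hR₁sq : R₁ * R₁ = -1)
    (R₂ : K₂ →L[ℂ] K₂)
    (L : K₁ ≃L[ℂ] K₂)
    (hL : ContinuousLinearMap.adjoint (L : K₁ →L[ℂ] K₂) ∘L R₂ ∘L (L : K₁ →L[ℂ] K₂) = R₁)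
    (Q : K₁ →L[ℂ] K₁)
    (hQ : Q = ContinuousLinearMap.adjoint (L : K₁ →L[ℂ] K₂) ∘L (L : K₁ →L[ℂ] K₂))
    -- conjugations
    (Γ₁ : K₁ → K₁) (Γ₂ : K₂ → K₂)
    (hΓ₁add : ∀ x y, Γ₁ (x + y) = Γ₁ x + Γ₁ y)
    (hΓ₁smul : ∀ (c : ℂ) (x : K₁), Γ₁ (c • x) = star c • Γ₁ x)
    (hΓ₁invol : ∀ x, Γ₁ (Γ₁ x) = x)
    (hΓ₁inner : ∀ x y, (inner ℂ (Γ₁ x) (Γ₁ y) : ℂ) = inner ℂ y x)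
    (hΓ₂inner : ∀ x y, (inner ℂ (Γ₂ x) (Γ₂ y) : ℂ) = inner ℂ y x)
    (hΓ₁R : ∀ x, Γ₁ (R₁ x) = R₁ (Γ₁ x))
    (hLΓ : ∀ x, (L : K₁ →L[ℂ] K₂) (Γ₁ x) = Γ₂ ((L : K₁ →L[ℂ] K₂) x))
    -- spectral projections
    (prj₁ : K₁ →L[ℂ] K₁) (prj₂ : K₂ →L[ℂ] K₂)
    (hprj₁ : prj₁ = (2 : ℂ)⁻¹ • (1 - Complex.I • R₁))
    (hprj₂ : prj₂ = (2 : ℂ)⁻¹ • (1 + Complex.I • R₂)) :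
    IsHilbertSchmidt (prj₁ ∘L (L.symm : K₂ →L[ℂ] K₁) ∘L prj₂) ↔ IsHilbertSchmidt (Q - 1) := by
  have hR₁L : (R₁ ∘L (L.symm : K₂ →L[ℂ] K₁)) ∘L ((L : K₁ →L[ℂ] K₂) ∘L (-R₁)) = .id ℂ K₁ := by
    ext x
    simp [show R₁ (R₁ x) = -x by simpa using congr($hR₁sq x)]
  have hΓQ : ∀ x, Γ₁ ((L.adjointCompSelf : K₁ →L[ℂ] K₁) x)
      = (L.adjointCompSelf : K₁ →L[ℂ] K₁) (Γ₁ x) := fun x =>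
    (adjoint_comp_self_apply_conj hΓ₁invol hΓ₁inner hΓ₂inner hLΓ x).symm
  rw [show prj₁ = projI R₁ from hprj₁, show prj₂ = projNegI R₂ from hprj₂,
    projI_comp_symm_comp_projNegI hR₁sq hL, IsHilbertSchmidt.smul_iff₀ (by simp),
    isHilbertSchmidt_comp_iff_of_comp_eq_id _ hR₁L,
    isHilbertSchmidt_projI_comp_iff hΓ₁add hΓ₁smul hΓ₁invol hΓ₁inner hΓ₁R
      (inv_sub_one_apply_conj hΓ₁add _ hΓQ),
    isHilbertSchmidt_inv_sub_one_iff, hQ]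
  rfl
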